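/- arXiv:math-ph/0308013 — 2 statements merged into one kernel-verified Lean document; each statement's English description precedes it below -/
import Mathlib

section
/- Let A be a commutative K-algebra. The inductive (Lunts–Rosenberg style) definition of r-order differential operators—Δ is of order r iff it is a finite sum Δ = Σ b_i Φ^i + Δ_{r−1} where Δ_{r−1} and all δ_a Φ^i are of order r−1—coincides with the standard definition: Δ is of order r iff δ_a Δ is of order r−1 for all a ∈ A. -/
section
variable {K A P Q : Type*} [CommRing K] [CommRing A] [Algebra K A]
  [AddCommGroup P] [Module K P] [Module A P]
  [AddCommGroup Q] [Module K Q] [Module A Q]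

/-- `(δ_a Φ)(p) = aΦ(p) − Φ(ap)`. -/
def delta (a : A) (Φ : P → Q) : P → Q := fun p => a • Φ p - Φ (a • p)

/-- Standard inductive definition of `r`-order differential operators. -/
def StdOrder : ℕ → (P → Q) → Prop
  | 0, Δ => ∀ a : A, delta a Δ = 0
  | r + 1, Δ => ∀ a : A, StdOrder r (delta a Δ)

/-- Lunts–Rosenberg style definition: `Δ` has order `r` iff it is a finite sum
`Δ = Σ bᵢ Φⁱ + Δ_{r−1}` where `Δ_{r−1}` and all `δ_a Φⁱ` have order `r − 1`. -/
def LuntsOrder : ℕ → (P → Q) → Prop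
  | 0, Δ => ∀ a : A, delta a Δ = 0
  | r + 1, Δ => ∃ (n : ℕ) (b : Fin n → A) (Φ : Fin n → (P → Q)) (Δ' : P → Q),
      (∀ (i : Fin n) (a : A), LuntsOrder r (delta a (Φ i))) ∧
      LuntsOrder r Δ' ∧ Δ = fun p => (∑ i, b i • Φ i p) + Δ' p


lemma delta_zero (a : A) : delta a (fun _ : P => (0 : Q)) = fun _ => 0 := by
  funext p; simp [delta]

lemma delta_add (a : A) (f g : P → Q) :
    delta a (fun p => f p + g p) = fun p => delta a f p + delta a g p := by
  funext p; simp [delta]; abel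

lemma delta_smul (a b : A) (f : P → Q) :
    delta a (fun p => b • f p) = fun p => b • delta a f p := by
  funext p; simp [delta, smul_sub, smul_comm a b]

lemma std_zero (r : ℕ) : StdOrder (A := A) r (fun _ : P => (0 : Q)) := by
  induction r with
  | zero => intro a; exact delta_zero a
  | succ r ih => intro a; rw [delta_zero]; exact ih

lemma std_add (r : ℕ) (f g : P → Q) (hf : StdOrder (A := A) r f)
    (hg : StdOrder (A := A) r g) : StdOrder (A := A) r (fun p => f p + g p) := by
  induction r generalizing f g with
  | zero => intro a; rw [delta_add, hf a, hg a]; funext p; simp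
  | succ r ih => intro a; rw [delta_add]; exact ih _ _ (hf a) (hg a)

lemma std_smul (r : ℕ) (b : A) (f : P → Q) (hf : StdOrder (A := A) r f) :
    StdOrder (A := A) r (fun p => b • f p) := by
  induction r generalizing f with
  | zero => intro a; rw [delta_smul, hf a]; funext p; simp
  | succ r ih => intro a; rw [delta_smul]; exact ih _ (hf a)

lemma std_sum (r : ℕ) (n : ℕ) (c : Fin n → (P → Q))
    (hc : ∀ i, StdOrder (A := A) r (c i)) :
    StdOrder (A := A) r (fun p => ∑ i, c i p) := by
  classical
  induction n with
  | zero => simpa using std_zero r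
  | succ n ih =>
    have : (fun p => ∑ i, c i p)
        = fun p => (∑ i : Fin n, c i.castSucc p) + c (Fin.last n) p := by
      funext p; rw [Fin.sum_univ_castSucc]
    rw [this]
    exact std_add r _ _ (ih _ (fun i => hc _)) (hc _)

lemma std_mono (r : ℕ) (f : P → Q) (hf : StdOrder (A := A) r f) :
    StdOrder (A := A) (r + 1) f := by
  induction r generalizing f with
  | zero =>
    intro a; rw [hf a]
    intro a'
    have : (0 : P → Q) = fun _ => (0 : Q) := rfl
    rw [this, delta_zero]
  | succ r ih => intro a; exact ih _ (hf a)

theorem lunts_iff_std (r : ℕ) (Δ : P → Q) :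
    LuntsOrder (A := A) r Δ ↔ StdOrder (A := A) r Δ := by
  induction r generalizing Δ with
  | zero => exact Iff.rfl
  | succ r ih =>
    constructor
    · rintro ⟨n, b, Φ, Δ', hΦ, hΔ', rfl⟩
      intro a
      have h1 : delta a (fun p => (∑ i, b i • Φ i p) + Δ' p)
          = fun p => (∑ i, b i • delta a (Φ i) p) + delta a Δ' p := by
        funext p
        simp only [delta, smul_add, smul_sub, Finset.smul_sum]
        rw [← sub_add_sub_comm, ← Finset.sum_sub_distrib]
        congr 1
        exact Finset.sum_congr rfl fun i _ => by rw [smul_comm]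
      rw [h1]
      apply std_add
      · exact std_sum r n _ fun i => std_smul r _ _ ((ih _).mp (hΦ i a))
      · exact std_mono r _ ((ih _).mp hΔ') a
    · intro h
      refine ⟨1, fun _ => 1, fun _ => Δ, fun _ => 0, ?_, ?_, ?_⟩
      · intro i a; exact (ih _).mpr (h a)
      · exact (ih _).mpr (std_zero r)
      · funext p; simp

/-- over a commutative algebra the two definitions agree. -/
theorem lunts_eq_standard (r : ℕ) (Δ : P →ₗ[K] Q) :
    LuntsOrder (A := A) r ⇑Δ ↔ StdOrder (A := A) r ⇑Δ :=
  lunts_iff_std r ⇑Δ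

end
end

section
/- Let A be a K-algebra and Δ_1, Δ_2 be K-linear endomorphisms of A that are left differential operators of orders n and m respectively (in the inductive sense: Δ is of order r iff Δ = Σ b_i Φ^i + Δ_{r−1} with Δ_{r−1} and all δ_a Φ^i of order r−1, and order 0 operators are sums a ↦ Σ c_i a c'_i). Then the composition Δ_1 ∘ Δ_2 is a left differential operator of order n + m. -/
section
variable {K A : Type*} [CommRing K] [Ring A] [Algebra K A]

/-- `(δ_a Φ)(b) = aΦ(b) − Φ(ab)` on `End_K(A)`. -/
def deltaE (a : A) (Φ : A →ₗ[K] A) : A →ₗ[K] A :=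
  (LinearMap.mulLeft K a).comp Φ - Φ.comp (LinearMap.mulLeft K a)

/-- Left differential operators of order `r` on `A`, inductively: order `0`
operators are finite sums `a ↦ Σ cᵢ a c'ᵢ`, and `Δ` has order `r` if
`Δ = Σ bᵢ Φⁱ + Δ_{r−1}` with `Δ_{r−1}` and all `δ_a Φⁱ` of order `r − 1`. -/
def LeftDiff : ℕ → (A →ₗ[K] A) → Prop
  | 0, Δ => ∃ (n : ℕ) (c c' : Fin n → A), ∀ x : A, Δ x = ∑ i, c i * x * c' i
  | r + 1, Δ => ∃ (n : ℕ) (b : Fin n → A) (Φ : Fin n → (A →ₗ[K] A))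
      (Δ' : A →ₗ[K] A),
      (∀ (i : Fin n) (a : A), LeftDiff r (deltaE a (Φ i))) ∧
      LeftDiff r Δ' ∧ ∀ x : A, Δ x = (∑ i, b i * Φ i x) + Δ' x

lemma deltaE_apply (a : A) (Φ : A →ₗ[K] A) (x : A) :
    deltaE a Φ x = a * Φ x - Φ (a * x) := by
  simp [deltaE, LinearMap.mulLeft_apply]

lemma leftDiff_ext {r : ℕ} {Δ Δ' : A →ₗ[K] A} (h : LeftDiff r Δ)
    (e : ∀ x, Δ' x = Δ x) : LeftDiff r Δ' := by
  cases r with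
  | zero =>
    obtain ⟨n, c, c', hc⟩ := h
    exact ⟨n, c, c', fun x => (e x).trans (hc x)⟩
  | succ r =>
    obtain ⟨n, b, Φ, Δ'', hδ, hΔ, hx⟩ := h
    exact ⟨n, b, Φ, Δ'', hδ, hΔ, fun x => (e x).trans (hx x)⟩

lemma leftDiff_zero (r : ℕ) : LeftDiff r (0 : A →ₗ[K] A) := by
  induction r with
  | zero => exact ⟨0, ![], ![], by simp⟩
  | succ r ih => exact ⟨0, ![], ![], 0, by simp, ih, by simp⟩

lemma leftDiff_add {r : ℕ} {Δ₁ Δ₂ : A →ₗ[K] A} (h₁ : LeftDiff r Δ₁)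
    (h₂ : LeftDiff r Δ₂) : LeftDiff r (Δ₁ + Δ₂) := by
  induction r generalizing Δ₁ Δ₂ with
  | zero =>
    obtain ⟨n₁, c₁, c₁', hc₁⟩ := h₁
    obtain ⟨n₂, c₂, c₂', hc₂⟩ := h₂
    refine ⟨n₁ + n₂, Fin.append c₁ c₂, Fin.append c₁' c₂', fun x => ?_⟩
    rw [Fin.sum_univ_add]
    simp only [Fin.append_left, Fin.append_right, LinearMap.add_apply,
      hc₁ x, hc₂ x]
  | succ r ih =>
    obtain ⟨n₁, b₁, Φ₁, Δ₁', hδ₁, hΔ₁, hx₁⟩ := h₁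
    obtain ⟨n₂, b₂, Φ₂, Δ₂', hδ₂, hΔ₂, hx₂⟩ := h₂
    refine ⟨n₁ + n₂, Fin.append b₁ b₂, Fin.append Φ₁ Φ₂, Δ₁' + Δ₂',
      fun i a => ?_, ih hΔ₁ hΔ₂, fun x => ?_⟩
    · induction i using Fin.addCases with
      | left i => simpa [Fin.append_left] using hδ₁ i a
      | right i => simpa [Fin.append_right] using hδ₂ i a
    · rw [Fin.sum_univ_add]
      simp only [Fin.append_left, Fin.append_right, LinearMap.add_apply,
        hx₁ x, hx₂ x]
      abel

lemma leftDiff_neg {r : ℕ} {Δ : A →ₗ[K] A} (h : LeftDiff r Δ) :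
    LeftDiff r (-Δ) := by
  cases r with
  | zero =>
    obtain ⟨n, c, c', hc⟩ := h
    exact ⟨n, fun i => -c i, c', fun x => by simp [hc x]⟩
  | succ r =>
    obtain ⟨n, b, Φ, Δ', hδ, hΔ, hx⟩ := h
    refine ⟨n, fun i => -b i, Φ, -Δ', hδ, leftDiff_neg hΔ, fun x => ?_⟩
    simp only [LinearMap.neg_apply, hx x, neg_add, Finset.sum_neg_distrib, neg_mul]

lemma leftDiff_sum {r : ℕ} {ι : Type*} (S : Finset ι) (f : ι → (A →ₗ[K] A))
    (h : ∀ i ∈ S, LeftDiff r (f i)) : LeftDiff r (∑ i ∈ S, f i) :=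
  Finset.sum_induction f (LeftDiff r) (fun _ _ => leftDiff_add)
    (leftDiff_zero r) h

lemma leftDiff_mono {r : ℕ} {Δ : A →ₗ[K] A} (h : LeftDiff r Δ) :
    LeftDiff (r + 1) Δ := by
  induction r generalizing Δ with
  | zero => exact ⟨0, ![], ![], Δ, by simp, h, fun x => by simp⟩
  | succ r ih =>
    obtain ⟨n, b, Φ, Δ', hδ, hΔ, hx⟩ := h
    exact ⟨n, b, Φ, Δ', fun i a => ih (hδ i a), ih hΔ, hx⟩

lemma leftDiff_single {r : ℕ} {Φ : A →ₗ[K] A} (b : A)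
    (h : ∀ a, LeftDiff r (deltaE a Φ)) :
    LeftDiff (r + 1) ((LinearMap.mulLeft K b).comp Φ) :=
  ⟨1, ![b], ![Φ], 0, fun i a => by fin_cases i <;> simpa using h a,
    leftDiff_zero r, fun x => by simp⟩

lemma leftDiff_of_deltas {r : ℕ} {Φ : A →ₗ[K] A}
    (h : ∀ a, LeftDiff r (deltaE a Φ)) : LeftDiff (r + 1) Φ :=
  leftDiff_ext (leftDiff_single 1 h) (fun x => by simp)

lemma leftDiff_mulLeft_comp {r : ℕ} {Δ : A →ₗ[K] A} (b : A)
    (h : LeftDiff r Δ) : LeftDiff r ((LinearMap.mulLeft K b).comp Δ) := by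
  induction r generalizing Δ b with
  | zero =>
    obtain ⟨n, c, c', hc⟩ := h
    exact ⟨n, fun i => b * c i, c', fun x => by
      simp [hc x, Finset.mul_sum, mul_assoc]⟩
  | succ r ih =>
    obtain ⟨n, b', Φ, Δ', hδ, hΔ, hx⟩ := h
    refine ⟨n, fun i => b * b' i, Φ, (LinearMap.mulLeft K b).comp Δ', hδ,
      ih b hΔ, fun x => ?_⟩
    simp [hx x, Finset.mul_sum, mul_add, mul_assoc]

lemma deltaE_mulRight_comp (a c : A) (Φ : A →ₗ[K] A) :
    deltaE a ((LinearMap.mulRight K c).comp Φ)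
      = (LinearMap.mulRight K c).comp (deltaE a Φ) := by
  ext x
  simp [deltaE_apply, deltaE, sub_mul, mul_assoc]

lemma leftDiff_mulRight_comp {r : ℕ} {Δ : A →ₗ[K] A} (c : A)
    (h : LeftDiff r Δ) : LeftDiff r ((LinearMap.mulRight K c).comp Δ) := by
  induction r generalizing Δ c with
  | zero =>
    obtain ⟨n, cc, c', hc⟩ := h
    exact ⟨n, cc, fun i => c' i * c, fun x => by
      simp [hc x, Finset.sum_mul, mul_assoc]⟩
  | succ r ih =>
    obtain ⟨n, b, Φ, Δ', hδ, hΔ, hx⟩ := h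
    refine ⟨n, b, fun i => (LinearMap.mulRight K c).comp (Φ i),
      (LinearMap.mulRight K c).comp Δ', fun i a => ?_, ih c hΔ, fun x => ?_⟩
    · rw [deltaE_mulRight_comp]
      exact ih c (hδ i a)
    · simp [hx x, Finset.sum_mul, add_mul, mul_assoc]

lemma deltaE_comp_mulRight (a c : A) (Φ : A →ₗ[K] A) :
    deltaE a (Φ.comp (LinearMap.mulRight K c))
      = (deltaE a Φ).comp (LinearMap.mulRight K c) := by
  ext x
  simp [deltaE, mul_assoc]

lemma leftDiff_comp_mulRight {r : ℕ} {Δ : A →ₗ[K] A} (c : A)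
    (h : LeftDiff r Δ) : LeftDiff r (Δ.comp (LinearMap.mulRight K c)) := by
  induction r generalizing Δ c with
  | zero =>
    obtain ⟨n, cc, c', hc⟩ := h
    exact ⟨n, cc, fun i => c * c' i, fun x => by
      simp [hc, mul_assoc]⟩
  | succ r ih =>
    obtain ⟨n, b, Φ, Δ', hδ, hΔ, hx⟩ := h
    refine ⟨n, b, fun i => (Φ i).comp (LinearMap.mulRight K c),
      Δ'.comp (LinearMap.mulRight K c), fun i a => ?_, ih c hΔ, fun x => ?_⟩
    · rw [deltaE_comp_mulRight]
      exact ih c (hδ i a)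
    · simp [hx]

lemma leftDiff_deltaE {r : ℕ} {Δ : A →ₗ[K] A} (h : LeftDiff r Δ) (a : A) :
    LeftDiff r (deltaE a Δ) := by
  induction r generalizing Δ a with
  | zero =>
    obtain ⟨n, c, c', hc⟩ := h
    refine ⟨n, fun i => a * c i - c i * a, c', fun x => ?_⟩
    simp only [deltaE_apply, hc, Finset.mul_sum, ← Finset.sum_sub_distrib]
    refine Finset.sum_congr rfl fun i _ => ?_
    noncomm_ring
  | succ r ih =>
    obtain ⟨n, b, Φ, Δ', hδ, hΔ, hx⟩ := h
    have key : LeftDiff (r + 1)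
        ((∑ i : Fin n, ((LinearMap.mulLeft K (b i)).comp (deltaE a (Φ i)) +
          (LinearMap.mulLeft K (a * b i - b i * a)).comp (Φ i))) +
          deltaE a Δ') := by
      refine leftDiff_add (leftDiff_sum _ _ fun i _ => leftDiff_add ?_ ?_)
        (leftDiff_mono (ih hΔ a))
      · exact leftDiff_single (b i) (fun a' => ih (hδ i a) a')
      · exact leftDiff_single _ (hδ i)
    refine leftDiff_ext key fun x => ?_
    simp only [deltaE_apply, hx, LinearMap.add_apply, LinearMap.sum_apply,
      LinearMap.comp_apply, LinearMap.mulLeft_apply, Finset.mul_sum,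
      mul_add]
    rw [add_sub_add_comm, ← Finset.sum_sub_distrib]
    congr 1
    refine Finset.sum_congr rfl fun i _ => ?_
    noncomm_ring

lemma leftDiff_comp_mulLeft {r : ℕ} {Δ : A →ₗ[K] A} (c : A)
    (h : LeftDiff r Δ) : LeftDiff r (Δ.comp (LinearMap.mulLeft K c)) := by
  have key : LeftDiff r ((LinearMap.mulLeft K c).comp Δ + -(deltaE c Δ)) :=
    leftDiff_add (leftDiff_mulLeft_comp c h) (leftDiff_neg (leftDiff_deltaE h c))
  refine leftDiff_ext key fun x => ?_
  simp [deltaE_apply]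

lemma leftDiff_comp_zero {r : ℕ} {Δ₁ Δ₂ : A →ₗ[K] A} (h₁ : LeftDiff r Δ₁)
    (h₂ : LeftDiff 0 Δ₂) : LeftDiff r (Δ₁.comp Δ₂) := by
  obtain ⟨n, c, c', hc⟩ := h₂
  have key : LeftDiff r (∑ j : Fin n,
      (Δ₁.comp (LinearMap.mulLeft K (c j))).comp (LinearMap.mulRight K (c' j))) :=
    leftDiff_sum _ _ fun j _ =>
      leftDiff_comp_mulRight _ (leftDiff_comp_mulLeft _ h₁)
  refine leftDiff_ext key fun x => ?_
  simp only [LinearMap.comp_apply, hc x, map_sum, LinearMap.sum_apply,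
    LinearMap.mulLeft_apply, LinearMap.mulRight_apply, mul_assoc]

lemma deltaE_comp (a : A) (Δ Ψ : A →ₗ[K] A) :
    deltaE a (Δ.comp Ψ) = Δ.comp (deltaE a Ψ) + (deltaE a Δ).comp Ψ := by
  ext x
  simp only [deltaE_apply, LinearMap.add_apply, LinearMap.comp_apply, map_sub]
  abel

/-- the composition of left differential operators of orders
`n` and `m` is a left differential operator of order `n + m`. -/
theorem leftDiff_comp (n m : ℕ) (Δ₁ Δ₂ : A →ₗ[K] A)
    (h₁ : LeftDiff n Δ₁) (h₂ : LeftDiff m Δ₂) :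
    LeftDiff (n + m) (Δ₁.comp Δ₂) := by
  induction m generalizing n Δ₁ Δ₂ with
  | zero => exact leftDiff_comp_zero h₁ h₂
  | succ s IH =>
    -- auxiliary: if `Θ` has order `k` and all `δ_a Ψ` have order `s`, then
    -- `Θ ∘ Ψ` has order `k + s + 1`.
    have H : ∀ (k : ℕ) (Θ Ψ : A →ₗ[K] A), LeftDiff k Θ →
        (∀ a, LeftDiff s (deltaE a Ψ)) → LeftDiff (k + s + 1) (Θ.comp Ψ) := by
      intro k
      induction k with
      | zero =>
        intro Θ Ψ hΘ hΨ
        obtain ⟨t, c, c', hc⟩ := hΘ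
        have hΨ' : LeftDiff (s + 1) Ψ := leftDiff_of_deltas hΨ
        have key : LeftDiff (s + 1) (∑ j : Fin t,
            (LinearMap.mulLeft K (c j)).comp
              ((LinearMap.mulRight K (c' j)).comp Ψ)) :=
          leftDiff_sum _ _ fun j _ =>
            leftDiff_mulLeft_comp _ (leftDiff_mulRight_comp _ hΨ')
        have e : LeftDiff (s + 1) (Θ.comp Ψ) := by
          refine leftDiff_ext key fun x => ?_
          simp only [LinearMap.comp_apply, hc (Ψ x), LinearMap.sum_apply,
            LinearMap.mulLeft_apply, LinearMap.mulRight_apply, mul_assoc]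
        simpa [Nat.zero_add] using e
      | succ k IHk =>
        intro Θ Ψ hΘ hΨ
        obtain ⟨t, b, Φ, Θ', hδ, hΘ', hx⟩ := hΘ
        have hcomp : ∀ i : Fin t, ∀ a : A,
            LeftDiff (k + s + 1) (deltaE a ((Φ i).comp Ψ)) := by
          intro i a
          rw [deltaE_comp]
          refine leftDiff_add ?_ ?_
          · have hΦ : LeftDiff (k + 1) (Φ i) := leftDiff_of_deltas (hδ i)
            have := IH (k + 1) (Φ i) (deltaE a Ψ) hΦ (hΨ a)
            simpa [Nat.add_right_comm] using this
          · exact IHk (deltaE a (Φ i)) Ψ (hδ i a) hΨ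
        have key : LeftDiff (k + s + 1 + 1)
            ((∑ i : Fin t, (LinearMap.mulLeft K (b i)).comp ((Φ i).comp Ψ)) +
              Θ'.comp Ψ) := by
          refine leftDiff_add (leftDiff_sum _ _ fun i _ =>
            leftDiff_single (b i) (hcomp i)) ?_
          exact leftDiff_mono (IHk Θ' Ψ hΘ' hΨ)
        have e : k + 1 + s + 1 = k + s + 1 + 1 := by omega
        rw [e]
        refine leftDiff_ext key fun x => ?_
        simp only [LinearMap.comp_apply, hx (Ψ x), LinearMap.add_apply,
          LinearMap.sum_apply, LinearMap.mulLeft_apply]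
    obtain ⟨t, c, Ψ, Δ₂', hδ₂, hΔ₂', hx₂⟩ := h₂
    have key : LeftDiff (n + s + 1)
        ((∑ j : Fin t, (Δ₁.comp (LinearMap.mulLeft K (c j))).comp (Ψ j)) +
          Δ₁.comp Δ₂') := by
      refine leftDiff_add (leftDiff_sum _ _ fun j _ =>
        H n _ (Ψ j) (leftDiff_comp_mulLeft _ h₁) (hδ₂ j)) ?_
      exact leftDiff_mono (IH n Δ₁ Δ₂' h₁ hΔ₂')
    have e : n + (s + 1) = n + s + 1 := by omega
    rw [e]
    refine leftDiff_ext key fun x => ?_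
    simp only [LinearMap.comp_apply, hx₂ x, map_add, map_sum,
      LinearMap.add_apply, LinearMap.sum_apply, LinearMap.mulLeft_apply]

end
end
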